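/- arXiv:0903.2955 — 5 statements merged into one kernel-verified Lean document; each statement's English description precedes it below -/
import Mathlib

section
/- Let χ be a Dirichlet character of conductor d, and let T_k(χ,n) = Σ_{ℓ=0}^{n} χ(ℓ) ℓ^k. Then for all positive integers w₁, w₂, d and every ℓ ≥ 0 and any x: Σ_{i=0}^{ℓ} (ℓ choose i) B_{i,χ}(w₂ x) T_{ℓ-i}(χ, d w₁ − 1) w₁^{i-1} w₂^{ℓ-i} = Σ_{i=0}^{ℓ} (ℓ choose i) B_{i,χ}(w₁ x) T_{ℓ-i}(χ, d w₂ − 1) w₂^{i-1} w₁^{ℓ-i}. (Equivalently, after multiplying both sides by w₁ w₂, the identity holds with exponents i and ℓ-i+1 appropriately adjusted.) -/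
/-!
Write `Φ(t) = ∑_{a<d} χ(a) e^{at}` (`charExpSum χ d`). The exponential generating functions
of `B_{n,χ}(c)` and of `T_k(χ, dw - 1)` satisfy `B(c; t) (e^{dt} - 1) = t e^{ct} Φ(t)`
(Bernoulli's generating function, summed over residues) and
`T(w; t) (e^{dt} - 1) = Φ(t) (e^{dwt} - 1)` (periodicity of `χ`).
Hence `w₁⁻¹ B(w₂x; w₁t) T(w₁; w₂t)` times `(e^{dw₁t} - 1)(e^{dw₂t} - 1)` equals
`t e^{w₁w₂xt} Φ(w₁t) Φ(w₂t) (e^{dw₁w₂t} - 1)`, which is symmetric in `w₁, w₂`; the identity is the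
comparison of the coefficients of `t^ℓ`.
-/

open Finset

/-- Generalized Bernoulli polynomial attached to a Dirichlet character, via the
standard closed formula `B_{n,χ}(x) = d^{n-1} ∑_{a<d} χ(a) B_n((a+x)/d)` which is
equivalent to the generating function definition
`∑_{a<d} χ(a) t e^{at} e^{xt}/(e^{dt}-1) = ∑ B_{n,χ}(x) tⁿ/n!`. -/
noncomputable def genBernoulliPoly {d : ℕ} (χ : DirichletCharacter ℂ d) (n : ℕ) (x : ℂ) : ℂ :=
  (d : ℂ) ^ ((n : ℤ) - 1) *
    ∑ a ∈ Finset.range d, χ (a : ZMod d) * Polynomial.aeval (((a : ℂ) + x) / d) (Polynomial.bernoulli n)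

/-- Generalized Bernoulli number `B_{n,χ} = B_{n,χ}(0)`. -/
noncomputable def genBernoulli {d : ℕ} (χ : DirichletCharacter ℂ d) (n : ℕ) : ℂ :=
  genBernoulliPoly χ n 0
/-- Character power sum `T_k(χ, n) = ∑_{ℓ=0}^{n} χ(ℓ) ℓ^k`. -/
noncomputable def charPowSum {d : ℕ} (χ : DirichletCharacter ℂ d) (k n : ℕ) : ℂ :=
  ∑ ℓ ∈ Finset.range (n + 1), χ (ℓ : ZMod d) * (ℓ : ℂ) ^ k

open PowerSeries
open Polynomial (aeval bernoulli bernoulli_generating_function)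
open scoped Nat

section EGF

variable {K : Type*} [Field K]

noncomputable def egf (f : ℕ → K) : K⟦X⟧ :=
  mk fun n => f n / n !

@[simp]
lemma coeff_egf (f : ℕ → K) (n : ℕ) : coeff n (egf f) = f n / n ! :=
  coeff_mk _ _

lemma rescale_egf (a : K) (f : ℕ → K) : rescale a (egf f) = egf fun n => a ^ n * f n := by
  ext n
  simp only [coeff_rescale, coeff_egf, mul_div_assoc]

lemma factorial_mul_coeff_egf_mul [CharZero K] (f g : ℕ → K) (n : ℕ) :
    n ! * coeff n (egf f * egf g) = ∑ i ∈ range (n + 1), (n.choose i : K) * f i * g (n - i) := by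
  rw [coeff_mul, Nat.sum_antidiagonal_eq_sum_range_succ_mk, mul_sum]
  refine sum_congr rfl fun i hi => ?_
  rw [coeff_egf, coeff_egf, Nat.cast_choose K (Nat.lt_succ_iff.mp (mem_range.mp hi))]
  field_simp

lemma sum_choose_mul_zpow_eq_coeff [CharZero K] (f g : ℕ → K) {u : K} (hu : u ≠ 0) (v : K) (ℓ : ℕ) :
    ∑ i ∈ range (ℓ + 1), (ℓ.choose i : K) * f i * g (ℓ - i) * u ^ ((i : ℤ) - 1) * v ^ (ℓ - i) =
      ℓ ! * coeff ℓ (C u⁻¹ * rescale u (egf f) * rescale v (egf g)) := by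
  rw [mul_assoc, coeff_C_mul, mul_left_comm, rescale_egf, rescale_egf,
    factorial_mul_coeff_egf_mul, mul_sum]
  refine sum_congr rfl fun i _ => ?_
  rw [zpow_sub_one₀ hu, zpow_natCast]
  ring

lemma rescale_exp_sub_one [CharZero K] (a b : K) :
    rescale b (rescale a (exp K) - 1) = rescale (a * b) (exp K) - 1 := by
  rw [map_sub, map_one, rescale_rescale]

lemma rescale_exp_sub_one_ne_zero [CharZero K] {a : K} (ha : a ≠ 0) :
    rescale a (exp K) - 1 ≠ 0 := by
  intro h
  have h1 := congrArg (coeff 1) h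
  simp [coeff_exp, ha] at h1

lemma egf_bernoulli_mul_exp_sub_one [CharZero K] (t : K) :
    egf (fun n => aeval t (bernoulli n)) * (exp K - 1) = X * rescale t (exp K) := by
  rw [← bernoulli_generating_function]
  congr 1
  ext n
  rw [coeff_egf, coeff_mk, map_smul, Rat.smul_def]
  push_cast
  ring

lemma rescale_egf_bernoulli_div_mul_exp_sub_one [CharZero K] {d : K} (hd : d ≠ 0) (y : K) :
    rescale d (egf fun n => aeval (y / d) (bernoulli n)) * (rescale d (exp K) - 1) =
      C d * X * rescale y (exp K) := by
  rw [← map_one (rescale d), ← map_sub, ← map_mul,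
    egf_bernoulli_mul_exp_sub_one, map_mul, rescale_X, rescale_rescale, div_mul_cancel₀ _ hd]

end EGF

section DirichletCharacter

variable {d : ℕ} (χ : DirichletCharacter ℂ d)

noncomputable def charExpSum (n : ℕ) : ℂ⟦X⟧ :=
  ∑ m ∈ range n, C (χ m) * rescale (m : ℂ) (exp ℂ)

lemma egf_charPowSum (n : ℕ) : egf (fun k => charPowSum χ k n) = charExpSum χ (n + 1) := by
  ext k
  simp only [coeff_egf, charPowSum, charExpSum, map_sum, coeff_C_mul, coeff_rescale, coeff_exp,
    sum_div]
  refine sum_congr rfl fun m _ => ?_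
  rw [one_div, map_inv₀ (algebraMap ℚ ℂ), map_natCast (algebraMap ℚ ℂ)]
  ring

lemma charExpSum_add_of_dvd {n : ℕ} (hn : d ∣ n) :
    charExpSum χ (n + d) = charExpSum χ n + rescale (n : ℂ) (exp ℂ) * charExpSum χ d := by
  simp only [charExpSum]
  rw [sum_range_add, mul_sum]
  congr 1
  refine sum_congr rfl fun a _ => ?_
  have hχ : ((n + a : ℕ) : ZMod d) = a := by
    rw [Nat.cast_add, (ZMod.natCast_eq_zero_iff n d).mpr hn, zero_add]
  rw [hχ, Nat.cast_add, ← exp_mul_exp_eq_exp_add]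
  ring

lemma charExpSum_mul_exp_sub_one (w : ℕ) :
    charExpSum χ (d * w) * (rescale (d : ℂ) (exp ℂ) - 1) =
      charExpSum χ d * (rescale ((d * w : ℕ) : ℂ) (exp ℂ) - 1) := by
  induction w with
  | zero => simp [charExpSum]
  | succ w ih =>
    rw [Nat.mul_succ, charExpSum_add_of_dvd χ (dvd_mul_right d w), add_mul, ih,
      Nat.cast_add, ← exp_mul_exp_eq_exp_add]
    ring

lemma egf_genBernoulliPoly_mul_exp_sub_one (hd : d ≠ 0) (c : ℂ) :
    egf (fun n => genBernoulliPoly χ n c) * (rescale (d : ℂ) (exp ℂ) - 1) =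
      X * rescale c (exp ℂ) * charExpSum χ d := by
  have hdC : (d : ℂ) ≠ 0 := Nat.cast_ne_zero.mpr hd
  have hsum : egf (fun n => genBernoulliPoly χ n c) = C (d : ℂ)⁻¹ * ∑ a ∈ range d,
      C (χ a) * rescale (d : ℂ) (egf fun n => aeval ((a + c) / d) (bernoulli n)) := by
    ext n
    simp only [coeff_egf, genBernoulliPoly, coeff_C_mul, map_sum, coeff_rescale, mul_sum, sum_div]
    refine sum_congr rfl fun a _ => ?_
    rw [zpow_sub_one₀ hdC, zpow_natCast]
    ring
  have hC : C (d : ℂ)⁻¹ * C (d : ℂ) = 1 := by rw [← map_mul, inv_mul_cancel₀ hdC, map_one]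
  rw [hsum, mul_assoc, sum_mul, charExpSum, mul_sum, mul_sum]
  refine sum_congr rfl fun a _ => ?_
  rw [mul_assoc, rescale_egf_bernoulli_div_mul_exp_sub_one hdC, ← exp_mul_exp_eq_exp_add]
  linear_combination (X * rescale c (exp ℂ) * C (χ a) * rescale (a : ℂ) (exp ℂ)) * hC

lemma egf_charPowSum_mul_exp_sub_one {w : ℕ} (hdw : d * w ≠ 0) :
    egf (fun k => charPowSum χ k (d * w - 1)) * (rescale (d : ℂ) (exp ℂ) - 1) =
      charExpSum χ d * (rescale ((d : ℂ) * w) (exp ℂ) - 1) := by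
  rw [egf_charPowSum, Nat.sub_add_cancel (Nat.one_le_iff_ne_zero.mpr hdw),
    charExpSum_mul_exp_sub_one, Nat.cast_mul]

lemma egf_genBernoulliPoly_charPowSum_mul (hd : d ≠ 0) {u v : ℕ} (hu : u ≠ 0) (x : ℂ) :
    C (u : ℂ)⁻¹ * rescale (u : ℂ) (egf fun n => genBernoulliPoly χ n (v * x)) *
        rescale (v : ℂ) (egf fun k => charPowSum χ k (d * u - 1)) *
        ((rescale ((d : ℂ) * u) (exp ℂ) - 1) * (rescale ((d : ℂ) * v) (exp ℂ) - 1)) =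
      X * rescale ((u * v : ℂ) * x) (exp ℂ) *
        (rescale (u : ℂ) (charExpSum χ d) * rescale (v : ℂ) (charExpSum χ d)) *
        (rescale ((d : ℂ) * u * v) (exp ℂ) - 1) := by
  have huC : (u : ℂ) ≠ 0 := Nat.cast_ne_zero.mpr hu
  have hB : rescale (u : ℂ) (egf fun n => genBernoulliPoly χ n (v * x)) *
      (rescale ((d : ℂ) * u) (exp ℂ) - 1) =
      C (u : ℂ) * X * rescale ((u * v : ℂ) * x) (exp ℂ) * rescale (u : ℂ) (charExpSum χ d) := by
    rw [← rescale_exp_sub_one, ← map_mul, egf_genBernoulliPoly_mul_exp_sub_one χ hd, map_mul,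
      map_mul, rescale_X, rescale_rescale]
    ring_nf
  have hT : rescale (v : ℂ) (egf fun k => charPowSum χ k (d * u - 1)) *
      (rescale ((d : ℂ) * v) (exp ℂ) - 1) =
      rescale (v : ℂ) (charExpSum χ d) * (rescale ((d : ℂ) * u * v) (exp ℂ) - 1) := by
    rw [← rescale_exp_sub_one, ← map_mul, egf_charPowSum_mul_exp_sub_one χ (mul_ne_zero hd hu),
      map_mul, rescale_exp_sub_one]
  have hC : C (u : ℂ)⁻¹ * C (u : ℂ) = 1 := by rw [← map_mul, inv_mul_cancel₀ huC, map_one]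
  calc _ = C (u : ℂ)⁻¹ * (rescale (u : ℂ) (egf fun n => genBernoulliPoly χ n (v * x)) *
          (rescale ((d : ℂ) * u) (exp ℂ) - 1)) *
        (rescale (v : ℂ) (egf fun k => charPowSum χ k (d * u - 1)) *
          (rescale ((d : ℂ) * v) (exp ℂ) - 1)) := by ring
    _ = _ := by
      rw [hB, hT]
      linear_combination (X * rescale ((u * v : ℂ) * x) (exp ℂ) * rescale (u : ℂ) (charExpSum χ d) *
        rescale (v : ℂ) (charExpSum χ d) * (rescale ((d : ℂ) * u * v) (exp ℂ) - 1)) * hC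

lemma egf_genBernoulliPoly_charPowSum_symm (hd : d ≠ 0) {w₁ w₂ : ℕ} (hw₁ : w₁ ≠ 0) (hw₂ : w₂ ≠ 0)
    (x : ℂ) :
    C (w₁ : ℂ)⁻¹ * rescale (w₁ : ℂ) (egf fun n => genBernoulliPoly χ n (w₂ * x)) *
        rescale (w₂ : ℂ) (egf fun k => charPowSum χ k (d * w₁ - 1)) =
      C (w₂ : ℂ)⁻¹ * rescale (w₂ : ℂ) (egf fun n => genBernoulliPoly χ n (w₁ * x)) *
        rescale (w₁ : ℂ) (egf fun k => charPowSum χ k (d * w₂ - 1)) := by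
  have hdC : (d : ℂ) ≠ 0 := Nat.cast_ne_zero.mpr hd
  refine mul_right_cancel₀ (mul_ne_zero
    (rescale_exp_sub_one_ne_zero (mul_ne_zero hdC (Nat.cast_ne_zero.mpr hw₁)))
    (rescale_exp_sub_one_ne_zero (mul_ne_zero hdC (Nat.cast_ne_zero.mpr hw₂)))) ?_
  rw [egf_genBernoulliPoly_charPowSum_mul χ hd hw₁, mul_comm (rescale _ (exp ℂ) - 1),
    egf_genBernoulliPoly_charPowSum_mul χ hd hw₂, mul_comm (w₂ : ℂ), mul_right_comm (d : ℂ),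
    mul_comm (rescale (w₂ : ℂ) (charExpSum χ d))]

end DirichletCharacter

theorem stmt3 {d : ℕ} (hd : 0 < d) (χ : DirichletCharacter ℂ d)
    (w₁ w₂ : ℕ) (hw₁ : 0 < w₁) (hw₂ : 0 < w₂) (ℓ : ℕ) (x : ℂ) :
    ∑ i ∈ Finset.range (ℓ + 1), (ℓ.choose i : ℂ) * genBernoulliPoly χ i ((w₂ : ℂ) * x) *
        charPowSum χ (ℓ - i) (d * w₁ - 1) * (w₁ : ℂ) ^ ((i : ℤ) - 1) * (w₂ : ℂ) ^ (ℓ - i) =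
      ∑ i ∈ Finset.range (ℓ + 1), (ℓ.choose i : ℂ) * genBernoulliPoly χ i ((w₁ : ℂ) * x) *
        charPowSum χ (ℓ - i) (d * w₂ - 1) * (w₂ : ℂ) ^ ((i : ℤ) - 1) * (w₁ : ℂ) ^ (ℓ - i) := by
  rw [sum_choose_mul_zpow_eq_coeff (fun n => genBernoulliPoly χ n _) (fun k => charPowSum χ k _)
      (Nat.cast_ne_zero.mpr hw₁.ne'),
    sum_choose_mul_zpow_eq_coeff (fun n => genBernoulliPoly χ n _) (fun k => charPowSum χ k _)
      (Nat.cast_ne_zero.mpr hw₂.ne'),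
    egf_genBernoulliPoly_charPowSum_symm χ hd.ne' hw₁.ne' hw₂.ne']
end

section
/- Let χ be a Dirichlet character of conductor d. For all positive integers w₁, w₂ and k ≥ 0 and any rational x: w₁^{k-1} Σ_{i=0}^{d w₁ − 1} χ(i) B_{k,χ}(w₂ x + (w₂/w₁) i) = w₂^{k-1} Σ_{i=0}^{d w₂ − 1} χ(i) B_{k,χ}(w₁ x + (w₁/w₂) i). -/
/-!
Writing `B_{k,χ}` with period `d w₂` instead of `d` (a consequence of the multiplication theorem
`B_k(m y) = m^{k-1} ∑_{i<m} B_k(y + i/m)`), the left-hand side becomes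
`(d w₁ w₂)^{k-1} ∑_{i < d w₁} ∑_{b < d w₂} χ(i) χ(b) B_k((x + i/w₁ + b/w₂)/d)`,
which is symmetric under `(w₁, i) ↔ (w₂, b)`.
-/

open Finset

theorem Finset.sum_range_mul_eq_sum_range_sum_range {M : Type*} [AddCommMonoid M] (d v : ℕ)
    (f : ℕ → M) :
    ∑ b ∈ range (d * v), f b = ∑ a ∈ range d, ∑ j ∈ range v, f (a + d * j) := by
  rw [sum_comm]
  induction v with
  | zero => simp
  | succ v ih =>
    rw [Nat.mul_succ, sum_range_add, ih, sum_range_succ]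
    simp only [add_comm (d * v)]

namespace Polynomial

theorem bernoulli_comp_natCast_mul_X (k : ℕ) {m : ℕ} (hm : m ≠ 0) :
    (bernoulli k).comp (C (m : ℚ) * X) =
      C ((m : ℚ) ^ k / m) * ∑ i ∈ range m, (bernoulli k).comp (X + C ((i : ℚ) / m)) := by
  apply map_injective (algebraMap ℚ ℝ) (algebraMap ℚ ℝ).injective
  refine Polynomial.funext fun x ↦ ?_
  simpa [bernoulliFun, eval_finsetSum, Polynomial.map_sum, map_comp] using bernoulliFun_mul k hm x

theorem aeval_bernoulli_natCast_mul {K : Type*} [Field K] [CharZero K] (k : ℕ) {m : ℕ}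
    (hm : m ≠ 0) (z : K) :
    aeval (m * z) (bernoulli k) = m ^ k / m * ∑ i ∈ range m, aeval (z + i / m) (bernoulli k) := by
  simpa [aeval_comp, map_sum] using congrArg (aeval z) (bernoulli_comp_natCast_mul_X k hm)

end Polynomial

section DistributionRelation

open Polynomial

theorem genBernoulliPoly_eq_sum_range_mul {d : ℕ} (χ : DirichletCharacter ℂ d) (k : ℕ) {v : ℕ}
    (hv : v ≠ 0) (y : ℂ) :
    genBernoulliPoly χ k y = ((d : ℂ) * v) ^ ((k : ℤ) - 1) *
      ∑ b ∈ range (d * v), χ (b : ZMod d) * aeval ((b + y) / (d * v)) (bernoulli k) := by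
  have hv' : (v : ℂ) ≠ 0 := Nat.cast_ne_zero.mpr hv
  rw [genBernoulliPoly, sum_range_mul_eq_sum_range_sum_range, mul_sum, mul_sum]
  refine sum_congr rfl fun a ha ↦ ?_
  have hd : (d : ℂ) ≠ 0 := Nat.cast_ne_zero.mpr (ne_zero_of_lt (mem_range.mp ha))
  have hχ (j : ℕ) : χ ((a + d * j : ℕ) : ZMod d) = χ a := by simp
  have hmul := aeval_bernoulli_natCast_mul k hv ((a + y) / (d * v))
  rw [show (v : ℂ) * ((a + y) / (d * v)) = (a + y) / d by field_simp] at hmul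
  have harg (j : ℕ) : ((a + d * j : ℕ) + y) / (d * v) = (a + y) / (d * v) + j / v := by
    push_cast; field_simp; ring
  simp only [hχ, harg, ← mul_sum, hmul, mul_zpow, zpow_sub_one₀ hv', zpow_natCast]
  ring

theorem sum_mul_genBernoulliPoly_eq_sum_sum {d : ℕ} (χ : DirichletCharacter ℂ d) (k : ℕ)
    {w v : ℕ} (hv : v ≠ 0) (z : ℂ) :
    (w : ℂ) ^ ((k : ℤ) - 1) *
        ∑ i ∈ range (d * w), χ (i : ZMod d) * genBernoulliPoly χ k (v * z + v / w * i) =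
      ((d : ℂ) * w * v) ^ ((k : ℤ) - 1) * ∑ i ∈ range (d * w), ∑ b ∈ range (d * v),
        χ (i : ZMod d) * χ (b : ZMod d) * aeval ((z + i / w + b / v) / d) (bernoulli k) := by
  have hv' : (v : ℂ) ≠ 0 := Nat.cast_ne_zero.mpr hv
  simp only [genBernoulliPoly_eq_sum_range_mul χ k hv, mul_sum]
  refine sum_congr rfl fun i hi ↦ sum_congr rfl fun b _ ↦ ?_
  obtain ⟨hd, hw⟩ := Nat.mul_ne_zero_iff.mp (ne_zero_of_lt (mem_range.mp hi))
  have hd' : (d : ℂ) ≠ 0 := Nat.cast_ne_zero.mpr hd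
  have hw' : (w : ℂ) ≠ 0 := Nat.cast_ne_zero.mpr hw
  rw [show ((b : ℂ) + (v * z + v / w * i)) / (d * v) = (z + i / w + b / v) / d by
    field_simp; ring]
  simp only [mul_zpow]
  ring

end DistributionRelation

theorem stmt5_general {d : ℕ} (χ : DirichletCharacter ℂ d)
    (w₁ w₂ : ℕ) (hw₁ : 0 < w₁) (hw₂ : 0 < w₂) (k : ℕ) (x : ℚ) :
    (w₁ : ℂ) ^ ((k : ℤ) - 1) * ∑ i ∈ Finset.range (d * w₁),
        χ (i : ZMod d) * genBernoulliPoly χ k ((w₂ : ℂ) * (x : ℂ) + (w₂ : ℂ) / w₁ * i) =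
      (w₂ : ℂ) ^ ((k : ℤ) - 1) * ∑ i ∈ Finset.range (d * w₂),
        χ (i : ZMod d) * genBernoulliPoly χ k ((w₁ : ℂ) * (x : ℂ) + (w₁ : ℂ) / w₂ * i) := by
  rw [sum_mul_genBernoulliPoly_eq_sum_sum χ k hw₂.ne',
    sum_mul_genBernoulliPoly_eq_sum_sum χ k hw₁.ne', sum_comm, mul_right_comm (d : ℂ)]
  congr 1
  refine sum_congr rfl fun i _ ↦ sum_congr rfl fun b _ ↦ ?_
  rw [mul_comm (χ (i : ZMod d)), add_right_comm (x : ℂ)]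

theorem stmt5 {d : ℕ} (hd : 0 < d) (χ : DirichletCharacter ℂ d)
    (w₁ w₂ : ℕ) (hw₁ : 0 < w₁) (hw₂ : 0 < w₂) (k : ℕ) (x : ℚ) :
    (w₁ : ℂ) ^ ((k : ℤ) - 1) * ∑ i ∈ Finset.range (d * w₁),
        χ (i : ZMod d) * genBernoulliPoly χ k ((w₂ : ℂ) * (x : ℂ) + (w₂ : ℂ) / w₁ * i) =
      (w₂ : ℂ) ^ ((k : ℤ) - 1) * ∑ i ∈ Finset.range (d * w₂),
        χ (i : ZMod d) * genBernoulliPoly χ k ((w₁ : ℂ) * (x : ℂ) + (w₁ : ℂ) / w₂ * i) :=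
  stmt5_general χ w₁ w₂ hw₁ hw₂ k x
end

section
/- For all positive integers w₁, w₂ and every k ≥ 0 and rational x: w₁^{k-1} Σ_{i=0}^{w₁−1} B_k(w₂ x + (w₂/w₁) i) = w₂^{k-1} Σ_{i=0}^{w₂−1} B_k(w₁ x + (w₁/w₂) i). (This is the d = 1, trivial character case of Theorem 3.) -/
/-!
Both sides equal `(w₁ w₂) ^ (k - 1) ∑_{i < w₁} ∑_{j < w₂} B_k(x + i / w₁ + j / w₂)`: expand each
summand with the multiplication theorem `B_k(m y) = m ^ (k - 1) ∑_{j < m} B_k(y + j / m)`, taking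
`m = w₂` on the left and `m = w₁` on the right.
-/

open Finset

namespace Polynomial

theorem bernoulli_eval_ratCast (k : ℕ) (x : ℚ) :
    (((bernoulli k).eval x : ℚ) : ℝ) = bernoulliFun k x := by
  rw [bernoulliFun, eval_map, ← eq_ratCast (algebraMap ℚ ℝ) x, eval₂_at_apply, eq_ratCast]

theorem bernoulli_eval_mul (k : ℕ) {m : ℕ} (hm : m ≠ 0) (x : ℚ) :
    (bernoulli k).eval (m * x) =
      (m : ℚ) ^ ((k : ℤ) - 1) * ∑ i ∈ range m, (bernoulli k).eval (x + i / m) := by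
  have hm' : (m : ℚ) ≠ 0 := Nat.cast_ne_zero.mpr hm
  rw [zpow_sub_one₀ hm', zpow_natCast, ← div_eq_mul_inv]
  apply Rat.cast_injective (α := ℝ)
  push_cast [bernoulli_eval_ratCast]
  exact bernoulliFun_mul k hm x

theorem pow_mul_sum_bernoulli_eval_eq_double_sum (k a : ℕ) {b : ℕ} (hb : b ≠ 0) (x : ℚ) :
    (a : ℚ) ^ ((k : ℤ) - 1) * ∑ i ∈ range a, (bernoulli k).eval (b * x + b / a * i) =
      (a : ℚ) ^ ((k : ℤ) - 1) * (b : ℚ) ^ ((k : ℤ) - 1) *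
        ∑ i ∈ range a, ∑ j ∈ range b, (bernoulli k).eval (x + i / a + j / b) := by
  have expand (i : ℕ) : (bernoulli k).eval (b * x + b / a * i) =
      (b : ℚ) ^ ((k : ℤ) - 1) * ∑ j ∈ range b, (bernoulli k).eval (x + i / a + j / b) := by
    rw [← bernoulli_eval_mul k hb]
    congr 1
    ring
  simp_rw [expand, ← mul_sum, mul_assoc]

end Polynomial

theorem stmt12 (w₁ w₂ : ℕ) (hw₁ : 0 < w₁) (hw₂ : 0 < w₂) (k : ℕ) (x : ℚ) :
    (w₁ : ℚ) ^ ((k : ℤ) - 1) * ∑ i ∈ Finset.range w₁,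
        (Polynomial.bernoulli k).eval ((w₂ : ℚ) * x + (w₂ : ℚ) / w₁ * i) =
      (w₂ : ℚ) ^ ((k : ℤ) - 1) * ∑ i ∈ Finset.range w₂,
        (Polynomial.bernoulli k).eval ((w₁ : ℚ) * x + (w₁ : ℚ) / w₂ * i) := by
  rw [Polynomial.pow_mul_sum_bernoulli_eval_eq_double_sum k w₁ hw₂.ne',
    Polynomial.pow_mul_sum_bernoulli_eval_eq_double_sum k w₂ hw₁.ne',
    mul_comm ((w₂ : ℚ) ^ _), sum_comm]
  simp_rw [add_right_comm x]
end

section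
/- For all positive integers w₁, w₂, every ℓ ≥ 0, and any rational x: Σ_{i=0}^{ℓ} (ℓ choose i) B_i(w₂ x) S_{ℓ-i}(w₁) w₁^{i-1} w₂^{ℓ-i} = Σ_{i=0}^{ℓ} (ℓ choose i) B_i(w₁ x) S_{ℓ-i}(w₂) w₂^{i-1} w₁^{ℓ-i}, where S_k(n) = Σ_{j=0}^{n-1} j^k. (The d = 1, trivial character case of Theorem 2.) -/
/-!
Multiply both sides by `w₁ w₂` and expand `S_{ℓ-i}(w₁) = ∑_{j < w₁} j^{ℓ-i}`. The addition formula
`B_ℓ(a + b) = ∑ (ℓ choose i) B_i(a) b^{ℓ-i}` collapses the left side to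
`w₁^ℓ w₂ ∑_{j < w₁} B_ℓ(w₂ (x + j / w₁))`, and Raabe's multiplication theorem
`m B_ℓ(m z) = m^ℓ ∑_{k < m} B_ℓ(z + k / m)` turns this into
`(w₁ w₂)^ℓ ∑_{j < w₁} ∑_{k < w₂} B_ℓ(x + j / w₁ + k / w₂)`, which is symmetric in `w₁, w₂`.
-/

/-- Power sum `S_k(n) = ∑_{j=0}^{n-1} j^k`. -/
def powSum (k n : ℕ) : ℚ := ∑ j ∈ Finset.range n, (j : ℚ) ^ k

open Finset PowerSeries Nat

theorem PowerSeries.exp_sub_one_ne_zero (A : Type*) [Ring A] [Algebra ℚ A] [Nontrivial A] :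
    exp A - 1 ≠ 0 := fun h => by
  simpa [coeff_exp] using congr(coeff 1 $h)

theorem bernoulliFun_ratCast (k : ℕ) (q : ℚ) :
    bernoulliFun k q = (Polynomial.bernoulli k).eval q :=
  Polynomial.eval_map_apply (algebraMap ℚ ℝ) q

namespace Polynomial

noncomputable def bernoulliEGF (t : ℚ) : ℚ⟦X⟧ :=
  PowerSeries.mk fun n => (bernoulli n).eval t / n !

theorem bernoulliEGF_mul_exp_sub_one (t : ℚ) :
    bernoulliEGF t * (exp ℚ - 1) = PowerSeries.X * rescale t (exp ℚ) := by
  rw [← bernoulli_generating_function t]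
  congr 2
  ext n
  simp [bernoulliEGF, aeval_def, eval₂_eq_eval_map, div_eq_inv_mul]

theorem bernoulliEGF_add (x y : ℚ) :
    bernoulliEGF (x + y) = bernoulliEGF x * rescale y (exp ℚ) := by
  refine mul_right_cancel₀ (exp_sub_one_ne_zero ℚ) ?_
  rw [bernoulliEGF_mul_exp_sub_one, mul_right_comm, bernoulliEGF_mul_exp_sub_one, mul_assoc,
    exp_mul_exp_eq_exp_add]

theorem bernoulli_eval_add (n : ℕ) (x y : ℚ) :
    (bernoulli n).eval (x + y) =
      ∑ i ∈ range (n + 1), (n.choose i : ℚ) * (bernoulli i).eval x * y ^ (n - i) := by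
  have h := congr(PowerSeries.coeff n $(bernoulliEGF_add x y))
  simp only [bernoulliEGF, PowerSeries.coeff_mk, PowerSeries.coeff_mul, coeff_rescale, coeff_exp,
    Nat.sum_antidiagonal_eq_sum_range_succ_mk] at h
  rw [div_eq_iff (by positivity)] at h
  rw [h, sum_mul]
  refine sum_congr rfl fun i hi => ?_
  rw [Nat.cast_choose ℚ (mem_range_succ_iff.mp hi)]
  simp only [Algebra.algebraMap_self, one_div, map_inv₀, map_natCast]
  field_simp

theorem pow_mul_bernoulli_eval_add_div (n : ℕ) {c : ℚ} (hc : c ≠ 0) (x y : ℚ) :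
    c ^ n * (bernoulli n).eval (x + y / c) =
      ∑ i ∈ range (n + 1), (n.choose i : ℚ) * (bernoulli i).eval x * y ^ (n - i) * c ^ i := by
  rw [bernoulli_eval_add, mul_sum]
  refine sum_congr rfl fun i hi => ?_
  rw [← Nat.sub_add_cancel (mem_range_succ_iff.mp hi), pow_add, div_pow, add_tsub_cancel_right]
  field_simp

theorem bernoulli_eval_nat_mul (k : ℕ) {m : ℕ} (hm : m ≠ 0) (x : ℚ) :
    (bernoulli k).eval (m * x) = m ^ k / m * ∑ i ∈ range m, (bernoulli k).eval (x + i / m) := by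
  apply Rat.cast_injective (α := ℝ)
  push_cast [← bernoulliFun_ratCast]
  exact bernoulliFun_mul k hm x

end Polynomial

noncomputable def bernoulliPowSumConv (w₁ w₂ ℓ : ℕ) (x : ℚ) : ℚ :=
  ∑ i ∈ range (ℓ + 1), (ℓ.choose i : ℚ) * (Polynomial.bernoulli i).eval ((w₂ : ℚ) * x) *
    powSum (ℓ - i) w₁ * (w₁ : ℚ) ^ ((i : ℤ) - 1) * (w₂ : ℚ) ^ (ℓ - i)

theorem mul_mul_bernoulliPowSumConv {w₁ w₂ : ℕ} (h₁ : w₁ ≠ 0) (h₂ : w₂ ≠ 0) (ℓ : ℕ) (x : ℚ) :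
    w₁ * w₂ * bernoulliPowSumConv w₁ w₂ ℓ x =
      w₁ ^ ℓ * w₂ ^ ℓ * ∑ j ∈ range w₁, ∑ k ∈ range w₂,
        (Polynomial.bernoulli ℓ).eval (x + j / w₁ + k / w₂) := by
  have hq₁ : (w₁ : ℚ) ≠ 0 := Nat.cast_ne_zero.mpr h₁
  calc w₁ * w₂ * bernoulliPowSumConv w₁ w₂ ℓ x
      = w₂ * ∑ j ∈ range w₁, ∑ i ∈ range (ℓ + 1), (ℓ.choose i : ℚ) *
          (Polynomial.bernoulli i).eval (w₂ * x) * (w₂ * j) ^ (ℓ - i) * w₁ ^ i := by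
        simp only [bernoulliPowSumConv, powSum, zpow_sub_one₀ hq₁, zpow_natCast, mul_sum, sum_mul]
        rw [sum_comm]
        refine sum_congr rfl fun j _ => sum_congr rfl fun i _ => ?_
        field_simp
        ring
    _ = w₂ * ∑ j ∈ range w₁, w₁ ^ ℓ * (Polynomial.bernoulli ℓ).eval (w₂ * x + w₂ * j / w₁) := by
        simp only [Polynomial.pow_mul_bernoulli_eval_add_div ℓ hq₁]
    _ = w₁ ^ ℓ * ∑ j ∈ range w₁, w₂ * (Polynomial.bernoulli ℓ).eval (w₂ * (x + j / w₁)) := by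
        simp only [mul_sum, mul_add, mul_div_assoc]
        exact sum_congr rfl fun j _ => by ring
    _ = w₁ ^ ℓ * w₂ ^ ℓ * ∑ j ∈ range w₁, ∑ k ∈ range w₂,
          (Polynomial.bernoulli ℓ).eval (x + j / w₁ + k / w₂) := by
        simp only [Polynomial.bernoulli_eval_nat_mul ℓ h₂, mul_sum]
        refine sum_congr rfl fun j _ => sum_congr rfl fun k _ => ?_
        field_simp

theorem stmt13 (w₁ w₂ : ℕ) (hw₁ : 0 < w₁) (hw₂ : 0 < w₂) (ℓ : ℕ) (x : ℚ) :
    ∑ i ∈ Finset.range (ℓ + 1), (ℓ.choose i : ℚ) *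
        (Polynomial.bernoulli i).eval ((w₂ : ℚ) * x) * powSum (ℓ - i) w₁ *
        (w₁ : ℚ) ^ ((i : ℤ) - 1) * (w₂ : ℚ) ^ (ℓ - i) =
      ∑ i ∈ Finset.range (ℓ + 1), (ℓ.choose i : ℚ) *
        (Polynomial.bernoulli i).eval ((w₁ : ℚ) * x) * powSum (ℓ - i) w₂ *
        (w₂ : ℚ) ^ ((i : ℤ) - 1) * (w₁ : ℚ) ^ (ℓ - i) := by
  show bernoulliPowSumConv w₁ w₂ ℓ x = bernoulliPowSumConv w₂ w₁ ℓ x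
  refine mul_left_cancel₀ (by positivity : (w₁ * w₂ : ℚ) ≠ 0) ?_
  rw [mul_mul_bernoulliPowSumConv hw₁.ne' hw₂.ne', mul_comm (w₁ : ℚ),
    mul_mul_bernoulliPowSumConv hw₂.ne' hw₁.ne', sum_comm]
  simp only [add_right_comm x, mul_comm ((w₁ : ℚ) ^ ℓ)]
end

section
/- For the p-adic invariant integral I(f) = lim_{N→∞} p^{-N} Σ_{x=0}^{p^N−1} f(x) applied to the monomial f(x) = x^n (n ≥ 0), one has I(x^n) = B_n, the n-th Bernoulli number. -/
/-!
Faulhaber's formula writes `p^{-N} Σ_{x < p^N} x^n` as a polynomial in `p^N` whose constant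
term is `B_n`. Since `p^N → 0` in `ℚ_p`, the average converges to that constant term.
-/

open Filter Finset Topology

theorem sum_range_pow_eq_mul_sum {K : Type*} [Field K] [CharZero K] (n M : ℕ) :
    ∑ x ∈ range M, (x : K) ^ n =
      M * ∑ i ∈ range (n + 1),
        ((bernoulli i * (n + 1).choose i / (n + 1) : ℚ) : K) * (M : K) ^ (n - i) := by
  have h := congrArg (Rat.cast (K := K)) (sum_range_pow M n)
  push_cast at h ⊢
  rw [h, mul_sum]
  refine sum_congr rfl fun i hi => ?_
  rw [Nat.sub_add_comm (mem_range_succ_iff.mp hi), pow_succ]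
  ring

theorem bernoulli_mul_choose_div_self (n : ℕ) :
    bernoulli n * (n + 1).choose n / (n + 1) = bernoulli n := by
  rw [Nat.choose_succ_self_right]
  push_cast
  field_simp

theorem tendsto_sum_mul_pow_pow_sub {K : Type*} [NormedField K] (n : ℕ) (a : ℕ → K) {x : K}
    (hx : ‖x‖ < 1) :
    Tendsto (fun N : ℕ => ∑ i ∈ range (n + 1), a i * (x ^ N) ^ (n - i)) atTop (𝓝 (a n)) := by
  have hcont : Continuous fun y : K => ∑ i ∈ range (n + 1), a i * y ^ (n - i) := by fun_prop
  have heval_zero : ∑ i ∈ range (n + 1), a i * (0 : K) ^ (n - i) = a n := by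
    rw [sum_eq_single n] <;> simp +contextual [Nat.sub_eq_zero_iff_le]
    omega
  have hcomp := (hcont.tendsto 0).comp (tendsto_pow_atTop_nhds_zero_of_norm_lt_one hx)
  rwa [heval_zero] at hcomp

theorem stmt19 (p : ℕ) [Fact p.Prime] (n : ℕ) :
    Filter.Tendsto
      (fun N : ℕ => (p : ℚ_[p]) ^ (-(N : ℤ)) * ∑ x ∈ Finset.range (p ^ N), (x : ℚ_[p]) ^ n)
      Filter.atTop (nhds ((bernoulli n : ℚ) : ℚ_[p])) := by
  have hp : (p : ℚ_[p]) ≠ 0 := Nat.cast_ne_zero.mpr (Fact.out : p.Prime).ne_zero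
  have hlim := tendsto_sum_mul_pow_pow_sub n
    (fun i => ((bernoulli i * (n + 1).choose i / (n + 1) : ℚ) : ℚ_[p])) Padic.norm_p_lt_one
  rw [bernoulli_mul_choose_div_self] at hlim
  refine hlim.congr fun N => ?_
  rw [sum_range_pow_eq_mul_sum, zpow_neg, zpow_natCast, Nat.cast_pow,
    inv_mul_cancel_left₀ (pow_ne_zero N hp)]
end
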